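/- arXiv:1504.06923 — 5 statements merged into one kernel-verified Lean document; each statement's English description precedes it below -/
import Mathlib

section
/- Let N ∈ {2,3} and μ₂ ≥ μ₁ > 0. If either (κ < −1 and β ≥ −(μ₁²μ₂)^{1/3}) or (κ = −1 and β > 0), then system (1) has no positive classical H¹ solution: there is no pair of C² functions u, v : ℝ^N → ℝ with u(x) > 0 and v(x) > 0 for all x, with u, v, ∇u, ∇v ∈ L²(ℝ^N), satisfying −Δu + u = μ₁u³ + βuv² − κv and −Δv + v = μ₂v³ + βu²v − κu pointwise. -/
/-!
Adding the two equations, `S = u + v` satisfies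
`-ΔS = μ₁u³ + μ₂v³ + β(u²v + uv²) - (1 + κ)S`, and the conditions on `κ` and `β` (through
`(μ₁²μ₂)^(1/3) (u²v + uv²) ≤ μ₁u³ + μ₂v³`) make the right-hand side positive: `S` is a positive,
strictly superharmonic function. The minimum principle on annuli `1 ≤ |x| ≤ R`, against the
harmonic functions `log |x|` (for `N = 2`) and `|x|⁻¹` (for `N = 3`), and `R → ∞` show that
outside the unit ball `S ≥ c` resp. `S ≥ c |x|⁻¹` for some `c > 0`. In these dimensions neither
lower bound is square integrable near infinity, contradicting `u, v ∈ L²`.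
-/

open MeasureTheory

/-- The Euclidean Laplacian: sum of second partial derivatives. -/
noncomputable def laplacian {N : ℕ} (u : EuclideanSpace ℝ (Fin N) → ℝ)
    (x : EuclideanSpace ℝ (Fin N)) : ℝ :=
  ∑ i, iteratedFDeriv ℝ 2 u x ![EuclideanSpace.single i 1, EuclideanSpace.single i 1]

open Metric Set Filter Topology Module InnerProductSpace
open scoped Laplacian

theorem laplacian_eq_laplacian {N : ℕ} (u : EuclideanSpace ℝ (Fin N) → ℝ) :
    laplacian u = Δ u := by
  rw [laplacian_eq_iteratedFDeriv_orthonormalBasis u (EuclideanSpace.basisFun (Fin N) ℝ)]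
  ext x
  simp [laplacian, EuclideanSpace.basisFun_apply]

theorem IsLocalMin.iteratedDeriv_two_nonneg {g : ℝ → ℝ} {t : ℝ} (hmin : IsLocalMin g t)
    (hg : ContinuousAt g t) : 0 ≤ iteratedDeriv 2 g t := by
  rw [iteratedDeriv_succ, iteratedDeriv_one]
  by_contra! hneg
  -- the second-derivative test makes `t` also a local maximum, so `g` is locally constant
  have hmax := isLocalMax_of_deriv_deriv_neg hneg hmin.deriv_eq_zero hg
  have hconst : g =ᶠ[𝓝 t] fun _ => g t :=
    (hmin.and hmax).mono fun s hs => le_antisymm hs.2 hs.1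
  rw [hconst.deriv.deriv_eq, deriv_const', deriv_const'] at hneg
  exact hneg.false

theorem deriv_quadratic (A B : ℝ) :
    deriv (fun t : ℝ => A + B * t + t ^ 2) = fun t => B + 2 * t := by
  ext t
  exact ((((hasDerivAt_id t).const_mul B).const_add A).add (hasDerivAt_pow 2 t)).deriv.trans
    (by simp)

section Line
variable {E F : Type*} [NormedAddCommGroup E] [NormedSpace ℝ E] [NormedAddCommGroup F]
  [NormedSpace ℝ F]

theorem iteratedFDeriv_two_self_eq_iteratedDeriv_line {f : E → F} {x : E}
    (hf : ContDiffAt ℝ 2 f x) (a : E) :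
    iteratedFDeriv ℝ 2 f x ![a, a] = iteratedDeriv 2 (fun t : ℝ => f (x + t • a)) 0 := by
  have hline : ∀ t : ℝ, HasDerivAt (fun t : ℝ => x + t • a) a t := fun t => by
    simpa using ((hasDerivAt_id t).smul_const a).const_add x
  have hderiv : deriv (fun t : ℝ => x + t • a) = fun _ => a := funext fun t => (hline t).deriv
  have hderiv₂ : iteratedDeriv 2 (fun t : ℝ => x + t • a) 0 = 0 := by
    rw [iteratedDeriv_succ, iteratedDeriv_one, hderiv, deriv_const']
  have h := iteratedDeriv_vcomp_two (f := fun t : ℝ => x + t • a) (x := 0) (g := f)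
    (by simpa using hf) (by fun_prop)
  rw [hderiv₂, hderiv] at h
  simp only [zero_smul, add_zero, map_zero, Function.comp_def] at h
  rw [h]
  congr 1
  ext i
  fin_cases i <;> rfl

end Line

section Laplacian
variable {E : Type*} [NormedAddCommGroup E] [InnerProductSpace ℝ E] [FiniteDimensional ℝ E]

theorem IsLocalMin.laplacian_nonneg {f : E → ℝ} {x : E} (hmin : IsLocalMin f x)
    (hf : ContDiffAt ℝ 2 f x) : 0 ≤ Δ f x := by
  rw [laplacian_eq_iteratedFDeriv_stdOrthonormalBasis]
  refine Finset.sum_nonneg fun i _ => ?_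
  rw [iteratedFDeriv_two_self_eq_iteratedDeriv_line hf]
  have hline : Continuous fun t : ℝ => x + t • stdOrthonormalBasis ℝ E i := by fun_prop
  refine IsLocalMin.iteratedDeriv_two_nonneg ?_ ?_
  · exact IsLocalMin.comp_continuous (g := fun t : ℝ => x + t • stdOrthonormalBasis ℝ E i)
      (by simpa using hmin) hline.continuousAt
  · have hf' : ContinuousAt f (x + (0 : ℝ) • stdOrthonormalBasis ℝ E i) := by
      simpa using hf.continuousAt
    exact ContinuousAt.comp (g := f) hf' hline.continuousAt

theorem IsCompact.le_of_laplacian_lt {K : Set E} (hK : IsCompact K) {f g : E → ℝ}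
    (hf : ContinuousOn f K) (hg : ContinuousOn g K)
    (hf₂ : ∀ x ∈ interior K, ContDiffAt ℝ 2 f x) (hg₂ : ∀ x ∈ interior K, ContDiffAt ℝ 2 g x)
    (hlt : ∀ x ∈ interior K, Δ g x < Δ f x) (hbdry : ∀ x ∈ K \ interior K, f x ≤ g x)
    {x : E} (hx : x ∈ K) : f x ≤ g x := by
  obtain ⟨z, hzK, hzmin⟩ := hK.exists_isMinOn ⟨x, hx⟩ (hg.sub hf)
  suffices 0 ≤ g z - f z by linarith [show g z - f z ≤ g x - f x from hzmin hx]
  by_cases hz : z ∈ interior K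
  · have hloc : IsLocalMin (g - f) z := hzmin.isLocalMin (mem_interior_iff_mem_nhds.mp hz)
    have := hloc.laplacian_nonneg ((hg₂ z hz).sub (hf₂ z hz))
    rw [(hg₂ z hz).laplacian_sub (hf₂ z hz)] at this
    linarith [hlt z hz]
  · exact sub_nonneg.mpr (hbdry z ⟨hzK, hz⟩)

theorem laplacian_comp_norm_sq {g : ℝ → ℝ} {x : E} (hg : ContDiffAt ℝ 2 g (‖x‖ ^ 2)) :
    Δ (fun y : E => g (‖y‖ ^ 2)) x
      = 4 * ‖x‖ ^ 2 * deriv (deriv g) (‖x‖ ^ 2) + 2 * finrank ℝ E * deriv g (‖x‖ ^ 2) := by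
  have hf : ContDiffAt ℝ 2 (fun y : E => g (‖y‖ ^ 2)) x :=
    hg.comp x (contDiff_norm_sq ℝ).contDiffAt
  rw [laplacian_eq_iteratedFDeriv_stdOrthonormalBasis]
  set b := stdOrthonormalBasis ℝ E
  have hterm : ∀ i, iteratedFDeriv ℝ 2 (fun y => g (‖y‖ ^ 2)) x ![b i, b i]
      = deriv (deriv g) (‖x‖ ^ 2) * (2 * ⟪x, b i⟫_ℝ) ^ 2 + deriv g (‖x‖ ^ 2) * 2 := by
    intro i
    set q : ℝ → ℝ := fun t => ‖x‖ ^ 2 + 2 * ⟪x, b i⟫_ℝ * t + t ^ 2 with hq_def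
    have hq : (fun t : ℝ => g (‖x + t • b i‖ ^ 2)) = g ∘ q := by
      ext t
      simp only [norm_add_sq_real, inner_smul_right, norm_smul, Real.norm_eq_abs,
        b.orthonormal.1 i, mul_one, sq_abs, hq_def, Function.comp_apply]
      ring_nf
    have hq₀ : q 0 = ‖x‖ ^ 2 := by simp [hq_def]
    rw [iteratedFDeriv_two_self_eq_iteratedDeriv_line hf, hq,
      iteratedDeriv_comp_two (by rwa [hq₀]) (by rw [hq_def]; fun_prop), hq₀]
    simp [hq_def, iteratedDeriv_succ, deriv_quadratic]
  simp only [hterm, Finset.sum_add_distrib, Finset.sum_const, Finset.card_univ, Fintype.card_fin,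
    nsmul_eq_mul, ← Finset.mul_sum]
  have hsum : ∑ i, (2 * ⟪x, b i⟫_ℝ) ^ 2 = 4 * ‖x‖ ^ 2 := by
    rw [← real_inner_self_eq_norm_sq, ← b.sum_inner_mul_inner x x, Finset.mul_sum]
    refine Finset.sum_congr rfl fun i _ => ?_
    rw [real_inner_comm (b i) x]
    ring
  rw [hsum]
  ring

theorem harmonicAt_log_norm_sq (hE : finrank ℝ E = 2) {x : E} (hx : x ≠ 0) :
    HarmonicAt (fun y : E => Real.log (‖y‖ ^ 2)) x := by
  refine ⟨(contDiff_norm_sq ℝ).contDiffAt.log (by positivity), ?_⟩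
  filter_upwards [eventually_ne_nhds hx] with y hy
  have hy' : ‖y‖ ^ 2 ≠ 0 := by positivity
  rw [laplacian_comp_norm_sq (Real.contDiffAt_log.mpr hy')]
  simp only [Real.deriv_log', deriv_inv', hE, Pi.zero_apply]
  field_simp
  ring

theorem harmonicAt_norm_sq_rpow {x : E} (hx : x ≠ 0) :
    HarmonicAt (fun y : E => (‖y‖ ^ 2) ^ (1 - finrank ℝ E / 2 : ℝ)) x := by
  refine ⟨(Real.contDiffAt_rpow_const_of_ne (by positivity)).comp x
    (contDiff_norm_sq ℝ).contDiffAt, ?_⟩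
  filter_upwards [eventually_ne_nhds hx] with y hy
  have hy' : 0 < ‖y‖ ^ 2 := by positivity
  have hd : deriv (fun s : ℝ => s ^ (1 - finrank ℝ E / 2 : ℝ))
      = fun s => (1 - finrank ℝ E / 2 : ℝ) * s ^ ((1 - finrank ℝ E / 2 : ℝ) - 1) :=
    funext fun s => Real.deriv_rpow_const s _
  have hpow : ‖y‖ ^ 2 * (‖y‖ ^ 2) ^ ((1 - finrank ℝ E / 2 : ℝ) - 1 - 1)
      = (‖y‖ ^ 2) ^ ((1 - finrank ℝ E / 2 : ℝ) - 1) := by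
    rw [Real.rpow_sub_one hy'.ne' ((1 - finrank ℝ E / 2 : ℝ) - 1)]
    field_simp
  rw [laplacian_comp_norm_sq (Real.contDiffAt_rpow_const_of_ne hy'.ne'), hd,
    deriv_const_mul_field']
  beta_reduce
  rw [Real.deriv_rpow_const, Pi.zero_apply]
  linear_combination (4 * (1 - finrank ℝ E / 2 : ℝ) * ((1 - finrank ℝ E / 2 : ℝ) - 1)) * hpow

theorem harmonicAt_norm_inv (hE : finrank ℝ E = 3) {x : E} (hx : x ≠ 0) :
    HarmonicAt (fun y : E => ‖y‖⁻¹) x := by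
  have h := harmonicAt_norm_sq_rpow hx
  rw [hE] at h
  convert h using 2 with y
  rw [← Real.rpow_natCast, ← Real.rpow_mul (norm_nonneg y)]
  norm_num
  exact (Real.rpow_neg_one _).symm

theorem le_of_harmonicAt_of_le_on_spheres {S Φ : E → ℝ} (hS : ContDiff ℝ 2 S)
    (hΔS : ∀ x, Δ S x < 0) (hΦ : ∀ x ≠ 0, HarmonicAt Φ x) {r R : ℝ} (hr : 0 < r)
    (hin : ∀ x, ‖x‖ = r → Φ x ≤ S x) (hout : ∀ x, ‖x‖ = R → Φ x ≤ S x) {x : E}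
    (hxr : r ≤ ‖x‖) (hxR : ‖x‖ ≤ R) : Φ x ≤ S x := by
  set K := (fun y : E => ‖y‖) ⁻¹' Icc r R
  have hK : IsCompact K := (isCompact_closedBall (0 : E) R).of_isClosed_subset
    (isClosed_Icc.preimage continuous_norm) fun y hy => mem_closedBall_zero_iff.mpr hy.2
  have hne : ∀ y ∈ K, y ≠ 0 := by
    rintro y hy rfl
    linarith [hy.1, norm_zero (E := E)]
  have hinterior : ∀ y, r < ‖y‖ → ‖y‖ < R → y ∈ interior K := fun y h₁ h₂ =>
    preimage_interior_subset_interior_preimage continuous_norm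
      (by rw [interior_Icc]; exact ⟨h₁, h₂⟩)
  refine hK.le_of_laplacian_lt (fun y hy => (hΦ y (hne y hy)).1.continuousAt.continuousWithinAt)
    hS.continuous.continuousOn (fun y hy => (hΦ y (hne y (interior_subset hy))).1)
    (fun y _ => hS.contDiffAt) (fun y hy => ?_) (fun y hy => ?_) ⟨hxr, hxR⟩
  · rw [(hΦ y (hne y (interior_subset hy))).2.self_of_nhds]
    exact hΔS y
  · obtain ⟨⟨hy₁, hy₂⟩, hy⟩ := hy
    rcases hy₁.eq_or_lt with h₁ | h₁
    · exact hin y h₁.symm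
    rcases hy₂.eq_or_lt with h₂ | h₂
    · exact hout y h₂
    exact (hy (hinterior y h₁ h₂)).elim

theorem le_of_laplacian_neg_of_finrank_eq_two (hE : finrank ℝ E = 2) {S : E → ℝ}
    (hS : ContDiff ℝ 2 S) (hΔS : ∀ x, Δ S x < 0) (hS₀ : ∀ x, 0 ≤ S x) {m : ℝ}
    (hm : ∀ x, ‖x‖ = 1 → m ≤ S x) {x : E} (hx : 1 ≤ ‖x‖) : m ≤ S x := by
  have hbound : ∀ R, max 1 ‖x‖ < R → m - m / Real.log (R ^ 2) * Real.log (‖x‖ ^ 2) ≤ S x := by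
    intro R hR
    have hlogR : 0 < Real.log (R ^ 2) := Real.log_pos (by nlinarith [le_max_left 1 ‖x‖])
    refine le_of_harmonicAt_of_le_on_spheres (Φ := fun y =>
      m - m / Real.log (R ^ 2) * Real.log (‖y‖ ^ 2)) hS hΔS
      (fun y hy => (harmonicAt_const m).sub ((harmonicAt_log_norm_sq hE hy).const_smul
        (c := m / Real.log (R ^ 2)))) one_pos (fun y hy => ?_) (fun y hy => ?_) hx
      (le_max_right 1 ‖x‖ |>.trans hR.le)
    · simpa [hy] using hm y hy
    · show m - m / Real.log (R ^ 2) * Real.log (‖y‖ ^ 2) ≤ S y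
      rw [hy, div_mul_cancel₀ _ hlogR.ne', sub_self]
      exact hS₀ y
  have hlim : Tendsto (fun R => m - m / Real.log (R ^ 2) * Real.log (‖x‖ ^ 2)) atTop (𝓝 m) := by
    have h := ((tendsto_const_nhds (x := m)).div_atTop (Real.tendsto_log_atTop.comp
      (tendsto_pow_atTop two_ne_zero))).mul_const (Real.log (‖x‖ ^ 2))
    simpa using (tendsto_const_nhds (x := m)).sub h
  exact le_of_tendsto hlim ((eventually_gt_atTop _).mono hbound)

theorem le_norm_mul_of_laplacian_neg_of_finrank_eq_three (hE : finrank ℝ E = 3) {S : E → ℝ}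
    (hS : ContDiff ℝ 2 S) (hΔS : ∀ x, Δ S x < 0) (hS₀ : ∀ x, 0 ≤ S x) {m : ℝ} (hm₀ : 0 ≤ m)
    (hm : ∀ x, ‖x‖ = 1 → m ≤ S x) {x : E} (hx : 1 ≤ ‖x‖) : m ≤ ‖x‖ * S x := by
  have hbound : ∀ R, max 1 ‖x‖ < R → m * ‖x‖⁻¹ - m * R⁻¹ ≤ S x := by
    intro R hR
    have hR₀ : 0 < R := by linarith [le_max_left 1 ‖x‖]
    refine le_of_harmonicAt_of_le_on_spheres (Φ := fun y => m * ‖y‖⁻¹ - m * R⁻¹) hS hΔS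
      (fun y hy => ((harmonicAt_norm_inv hE hy).const_smul (c := m)).sub
        (harmonicAt_const _)) one_pos (fun y hy => ?_) (fun y hy => ?_) hx
      (le_max_right 1 ‖x‖ |>.trans hR.le)
    · simp only [hy, inv_one, mul_one]
      linarith [hm y hy, mul_nonneg hm₀ (inv_nonneg.mpr hR₀.le)]
    · simpa [hy] using hS₀ y
  have hlim : Tendsto (fun R => m * ‖x‖⁻¹ - m * R⁻¹) atTop (𝓝 (m * ‖x‖⁻¹)) := by
    simpa using (tendsto_const_nhds (x := m * ‖x‖⁻¹)).sub
      (tendsto_inv_atTop_zero.const_mul m)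
  have h := le_of_tendsto hlim ((eventually_gt_atTop _).mono hbound)
  rwa [← div_eq_mul_inv, div_le_iff₀' (by linarith)] at h

end Laplacian

section Integrability
variable {E : Type*} [NormedAddCommGroup E] [InnerProductSpace ℝ E] [FiniteDimensional ℝ E]
  [MeasurableSpace E] [BorelSpace E] [Nontrivial E] (μ : Measure E) [μ.IsAddHaarMeasure]

theorem mul_measureReal_annulus_le_integral_sq {S : E → ℝ} (hS : MemLp S 2 μ) {ρ c : ℝ}
    (hρ : 0 < ρ) (hc : 0 ≤ c) (hle : ∀ x, ρ ≤ ‖x‖ → ‖x‖ ≤ 2 * ρ → c ≤ S x) :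
    c ^ 2 * ((2 ^ finrank ℝ E - 1) * ρ ^ finrank ℝ E * μ.real (ball 0 1))
      ≤ ∫ x, S x ^ 2 ∂μ := by
  set A := closedBall (0 : E) (2 * ρ) \ ball 0 ρ
  have hsub : ball (0 : E) ρ ⊆ closedBall 0 (2 * ρ) :=
    ball_subset_closedBall.trans (closedBall_subset_closedBall (by linarith))
  have hA : μ.real A = (2 ^ finrank ℝ E - 1) * ρ ^ finrank ℝ E * μ.real (ball 0 1) := by
    rw [measureReal_sdiff hsub measurableSet_ball measure_closedBall_lt_top.ne, measureReal_def,
      measureReal_def, measureReal_def, Measure.addHaar_closedBall μ 0 (by positivity),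
      Measure.addHaar_ball μ 0 hρ.le, ENNReal.toReal_mul, ENNReal.toReal_mul,
      ENNReal.toReal_ofReal (by positivity), ENNReal.toReal_ofReal (by positivity)]
    ring
  have hint : Integrable (fun x => S x ^ 2) μ := hS.integrable_sq
  calc c ^ 2 * ((2 ^ finrank ℝ E - 1) * ρ ^ finrank ℝ E * μ.real (ball 0 1))
      = c ^ 2 * μ.real A := by rw [hA]
    _ ≤ ∫ x in A, S x ^ 2 ∂μ := by
      refine setIntegral_ge_of_const_le_real (measurableSet_closedBall.diff measurableSet_ball)
        ((measure_mono sdiff_subset).trans_lt measure_closedBall_lt_top).ne (fun x hx => ?_)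
        hint.integrableOn
      simp only [A, Set.mem_sdiff, mem_closedBall_zero_iff, mem_ball_zero_iff, not_lt] at hx
      exact pow_le_pow_left₀ hc (hle x hx.2 hx.1) 2
    _ ≤ ∫ x, S x ^ 2 ∂μ := setIntegral_le_integral hint (.of_forall fun x => sq_nonneg _)

theorem not_memLp_two_of_le_norm_pow_mul {S : E → ℝ} {b : ℝ} (hb : 0 < b) {p : ℕ}
    (hp : 2 * p < finrank ℝ E) (hS : ∀ x, 1 ≤ ‖x‖ → b ≤ ‖x‖ ^ p * S x) : ¬ MemLp S 2 μ := by
  intro hL2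
  set n := finrank ℝ E
  have hV : 0 < μ.real (ball 0 1) :=
    ENNReal.toReal_pos (measure_ball_pos μ 0 one_pos).ne' measure_ball_lt_top.ne
  set C := (b / 2 ^ p) ^ 2 * ((2 ^ n - 1) * μ.real (ball 0 1))
  have hC : 0 < C := by
    have : (1 : ℝ) < 2 ^ n := one_lt_pow₀ one_lt_two (by omega)
    have : 0 < (2 : ℝ) ^ n - 1 := by linarith
    positivity
  have hannulus : ∀ ρ : ℝ, 1 ≤ ρ → C * ρ ^ (n - 2 * p) ≤ ∫ x, S x ^ 2 ∂μ := by
    intro ρ hρ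
    have hle : ∀ x, ρ ≤ ‖x‖ → ‖x‖ ≤ 2 * ρ → b / (2 * ρ) ^ p ≤ S x := by
      intro x h₁ h₂
      have hx : 0 < ‖x‖ ^ p := pow_pos (by linarith) p
      have hSx : 0 ≤ S x := (pos_of_mul_pos_right (hb.trans_le (hS x (hρ.trans h₁))) hx.le).le
      rw [div_le_iff₀ (by positivity)]
      calc b ≤ ‖x‖ ^ p * S x := hS x (hρ.trans h₁)
        _ ≤ (2 * ρ) ^ p * S x := by gcongr
        _ = S x * (2 * ρ) ^ p := mul_comm _ _
    have hpow : ρ ^ n = ρ ^ (2 * p) * ρ ^ (n - 2 * p) := by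
      rw [← pow_add, Nat.add_sub_cancel' hp.le]
    calc C * ρ ^ (n - 2 * p)
        = (b / (2 * ρ) ^ p) ^ 2 * ((2 ^ n - 1) * ρ ^ n * μ.real (ball 0 1)) := by
          rw [hpow, mul_pow, pow_mul]
          simp only [C]
          field_simp
          ring
      _ ≤ ∫ x, S x ^ 2 ∂μ :=
          mul_measureReal_annulus_le_integral_sq μ hL2 (by linarith) (by positivity) hle
  have htend : Tendsto (fun ρ : ℝ => C * ρ ^ (n - 2 * p)) atTop atTop :=
    (tendsto_pow_atTop (by omega)).const_mul_atTop hC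
  obtain ⟨ρ, hρ, hbig⟩ :=
    ((eventually_ge_atTop 1).and (htend.eventually_gt_atTop (∫ x, S x ^ 2 ∂μ))).exists
  linarith [hannulus ρ hρ]
end Integrability

theorem rpow_one_third_mul_le_add_cubes {μ₁ μ₂ a b : ℝ} (hμ₁ : 0 ≤ μ₁) (hμ₁₂ : μ₁ ≤ μ₂)
    (ha : 0 ≤ a) (hb : 0 ≤ b) :
    (μ₁ ^ 2 * μ₂) ^ ((1 : ℝ) / 3) * (a ^ 2 * b + a * b ^ 2) ≤ μ₁ * a ^ 3 + μ₂ * b ^ 3 := by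
  have hμ₂ : 0 ≤ μ₂ := hμ₁.trans hμ₁₂
  set s := μ₁ ^ ((1 : ℝ) / 3)
  set t := μ₂ ^ ((1 : ℝ) / 3)
  have hcube : ∀ {μ : ℝ}, 0 ≤ μ → (μ ^ ((1 : ℝ) / 3)) ^ 3 = μ := fun hμ => by
    rw [← Real.rpow_natCast, ← Real.rpow_mul hμ]
    norm_num
  have hcoef : (μ₁ ^ 2 * μ₂) ^ ((1 : ℝ) / 3) = s ^ 2 * t := by
    rw [Real.mul_rpow (by positivity) hμ₂, Real.rpow_pow_comm hμ₁]
  have hst : s ≤ t := Real.rpow_le_rpow hμ₁ hμ₁₂ (by norm_num)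
  have hs : 0 ≤ s := by positivity
  rw [hcoef, ← hcube hμ₁, ← hcube hμ₂]
  -- `s³a³ + t³b³ - s²t(a²b + ab²) = (sa + tb)(sa - tb)² + st ab² (t - s)`
  have h₁ : 0 ≤ (s * a + t * b) * (s * a - t * b) ^ 2 := by positivity
  have h₂ : s * (s * t * a * b ^ 2) ≤ t * (s * t * a * b ^ 2) := by gcongr
  linear_combination h₁ + h₂

theorem one_add_mul_add_lt_cubic {μ₁ μ₂ κ β a b : ℝ} (hμ₁ : 0 ≤ μ₁) (hμ₁₂ : μ₁ ≤ μ₂)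
    (hκβ : (κ < -1 ∧ -((μ₁ ^ 2 * μ₂) ^ ((1 : ℝ) / 3)) ≤ β) ∨ (κ = -1 ∧ 0 < β))
    (ha : 0 < a) (hb : 0 < b) :
    (1 + κ) * (a + b) < μ₁ * a ^ 3 + μ₂ * b ^ 3 + β * (a ^ 2 * b + a * b ^ 2) := by
  have hmixed : 0 < a ^ 2 * b + a * b ^ 2 := by positivity
  rcases hκβ with ⟨hκ, hβ⟩ | ⟨rfl, hβ⟩
  · have hcubes := rpow_one_third_mul_le_add_cubes hμ₁ hμ₁₂ ha.le hb.le
    have hβ' := mul_le_mul_of_nonneg_right hβ hmixed.le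
    nlinarith
  · have : 0 ≤ μ₁ * a ^ 3 + μ₂ * b ^ 3 := by
      have := hμ₁.trans hμ₁₂
      positivity
    nlinarith [mul_pos hβ hmixed]

theorem stmt0 (N : ℕ) (hN : N = 2 ∨ N = 3) (μ₁ μ₂ κ β : ℝ)
    (hμ₁ : 0 < μ₁) (hμ₁₂ : μ₁ ≤ μ₂)
    (hcase : (κ < -1 ∧ -((μ₁ ^ 2 * μ₂) ^ ((1 : ℝ) / 3)) ≤ β) ∨ (κ = -1 ∧ 0 < β)) :
    ¬ ∃ u v : EuclideanSpace ℝ (Fin N) → ℝ,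
      ContDiff ℝ 2 u ∧ ContDiff ℝ 2 v ∧
      (∀ x, 0 < u x) ∧ (∀ x, 0 < v x) ∧
      MemLp u 2 (volume : Measure (EuclideanSpace ℝ (Fin N))) ∧
      MemLp v 2 (volume : Measure (EuclideanSpace ℝ (Fin N))) ∧
      MemLp (fun x => gradient u x) 2 (volume : Measure (EuclideanSpace ℝ (Fin N))) ∧
      MemLp (fun x => gradient v x) 2 (volume : Measure (EuclideanSpace ℝ (Fin N))) ∧
      (∀ x, -laplacian u x + u x = μ₁ * u x ^ 3 + β * u x * v x ^ 2 - κ * v x) ∧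
      (∀ x, -laplacian v x + v x = μ₂ * v x ^ 3 + β * u x ^ 2 * v x - κ * u x) := by
  rintro ⟨u, v, hu, hv, hu₀, hv₀, hu₂, hv₂, -, -, hequ, heqv⟩
  simp only [laplacian_eq_laplacian] at hequ heqv
  have hS : ContDiff ℝ 2 (u + v) := hu.add hv
  have hS₀ : ∀ x, 0 ≤ (u + v) x := fun x => (add_pos (hu₀ x) (hv₀ x)).le
  have hΔS : ∀ x, Δ (u + v) x < 0 := fun x => by
    rw [hu.contDiffAt.laplacian_add hv.contDiffAt]
    linarith [hequ x, heqv x, one_add_mul_add_lt_cubic hμ₁.le hμ₁₂ hcase (hu₀ x) (hv₀ x)]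
  have : Nontrivial (EuclideanSpace ℝ (Fin N)) := by rcases hN with rfl | rfl <;> infer_instance
  obtain ⟨z, -, hz⟩ := (isCompact_sphere (0 : EuclideanSpace ℝ (Fin N)) 1).exists_isMinOn
    (NormedSpace.sphere_nonempty.mpr zero_le_one) hS.continuous.continuousOn
  have hm : ∀ x : EuclideanSpace ℝ (Fin N), ‖x‖ = 1 → (u + v) z ≤ (u + v) x :=
    fun x hx => hz (mem_sphere_zero_iff_norm.mpr hx)
  have hm₀ : 0 < (u + v) z := add_pos (hu₀ z) (hv₀ z)
  have hL2 : MemLp (u + v) 2 volume := hu₂.add hv₂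
  rcases hN with rfl | rfl
  · refine not_memLp_two_of_le_norm_pow_mul volume hm₀ (p := 0) (by simp) (fun x hx => ?_) hL2
    simpa using le_of_laplacian_neg_of_finrank_eq_two (by simp) hS hΔS hS₀ hm hx
  · exact not_memLp_two_of_le_norm_pow_mul volume hm₀ (p := 1) (by simp) (fun x hx => by
      simpa using le_norm_mul_of_laplacian_neg_of_finrank_eq_three (by simp) hS hΔS hS₀ hm₀.le
        hm hx) hL2
end

section
/- (Positive energy on the Nehari manifold.) Let N ≥ 1, −1 < κ < 0, β > 0, μ₂ ≥ μ₁ > 0, and let C > 0 be a constant such that ∫w⁴ ≤ C(∫(|∇w|² + w²))² for every C¹ function w : ℝ^N → ℝ with w, ∇w ∈ L²(ℝ^N) and w⁴ integrable. If (u,v) is a pair of C¹ functions ℝ^N → ℝ with u, v, ∇u, ∇v ∈ L²(ℝ^N), u⁴ and v⁴ integrable, lying on the Nehari set, then I_{κ,β}(u,v) = ¼(‖u‖² + ‖v‖² + 2κ∫uv) and I_{κ,β}(u,v) ≥ (1+κ)²/(16C(μ₂+β)) > 0. -/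
open MeasureTheory

/-! On the Nehari set the quartic terms equal `S := ‖u‖² + ‖v‖² + 2κ∫uv`, so `I = S/4`.
Since `2|∫uv| ≤ ∫u² + ∫v²` and `κ < 0`, `S ≥ (1 + κ) t` with `t := ‖u‖² + ‖v‖²`; since
`2u²v² ≤ u⁴ + v⁴`, `μ₁ ≤ μ₂` and by the Sobolev inequality, `S ≤ (μ₂ + β) C t²`.
As `t > 0`, comparing the two bounds forces `t ≥ (1 + κ)/((μ₂ + β) C)`, hence
`S ≥ (1 + κ)²/((μ₂ + β) C)`. -/

/-- The squared H¹ norm `∫ (|∇w|² + w²)`. -/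
noncomputable def H1sq {N : ℕ} (w : EuclideanSpace ℝ (Fin N) → ℝ) : ℝ :=
  ∫ x, (‖gradient w x‖ ^ 2 + w x ^ 2)

/-- The energy functional `I_{κ,β}`. -/
noncomputable def energy {N : ℕ} (μ₁ μ₂ κ β : ℝ)
    (u v : EuclideanSpace ℝ (Fin N) → ℝ) : ℝ :=
  (1 / 2) * (H1sq u + H1sq v) + κ * (∫ x, u x * v x)
    - (1 / 4) * (∫ x, (μ₁ * u x ^ 4 + μ₂ * v x ^ 4))
    - (β / 2) * (∫ x, u x ^ 2 * v x ^ 2)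

theorem sq_div_le_of_mul_le_of_le_mul_sq {a c t s : ℝ} (ha : 0 ≤ a) (hc : 0 < c) (ht : 0 < t)
    (hlow : a * t ≤ s) (hup : s ≤ c * t ^ 2) : a ^ 2 / c ≤ s := by
  have hact : a ≤ c * t := le_of_mul_le_mul_right (by nlinarith) ht
  calc a ^ 2 / c ≤ a * t := by
        rw [div_le_iff₀ hc]; nlinarith [mul_le_mul_of_nonneg_left hact ha]
    _ ≤ s := hlow

section Measure

variable {α : Type*} [MeasurableSpace α] {μ : Measure α} {u v : α → ℝ}

theorem two_mul_integral_mul_le_integral_sq_add (hu : MemLp u 2 μ) (hv : MemLp v 2 μ) :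
    2 * ∫ x, u x * v x ∂μ ≤ (∫ x, u x ^ 2 ∂μ) + ∫ x, v x ^ 2 ∂μ := by
  rw [← integral_const_mul, ← integral_add hu.integrable_sq hv.integrable_sq]
  refine integral_mono ((hu.integrable_mul hv).const_mul 2)
    (hu.integrable_sq.add hv.integrable_sq) fun x => ?_
  simpa [mul_assoc] using two_mul_le_add_sq (u x) (v x)

theorem integrable_sq_mul_sq (hu : AEStronglyMeasurable u μ) (hv : AEStronglyMeasurable v μ)
    (hu4 : Integrable (fun x => u x ^ 4) μ) (hv4 : Integrable (fun x => v x ^ 4) μ) :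
    Integrable (fun x => u x ^ 2 * v x ^ 2) μ := by
  have sq_memLp {w : α → ℝ} (hw : AEStronglyMeasurable w μ)
      (hw4 : Integrable (fun x => w x ^ 4) μ) : MemLp (fun x => w x ^ 2) 2 μ :=
    (memLp_two_iff_integrable_sq (f := fun x => w x ^ 2) (hw.pow 2)).2
      (by simpa only [← pow_mul] using hw4)
  exact (sq_memLp hu hu4).integrable_mul (sq_memLp hv hv4)

theorem integral_quartic_le {a b c : ℝ} (hab : a ≤ b) (hc : 0 ≤ c)
    (hu : AEStronglyMeasurable u μ) (hv : AEStronglyMeasurable v μ)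
    (hu4 : Integrable (fun x => u x ^ 4) μ) (hv4 : Integrable (fun x => v x ^ 4) μ) :
    ∫ x, (a * u x ^ 4 + b * v x ^ 4 + 2 * c * u x ^ 2 * v x ^ 2) ∂μ ≤
      (b + c) * ((∫ x, u x ^ 4 ∂μ) + ∫ x, v x ^ 4 ∂μ) := by
  rw [← integral_add hu4 hv4, ← integral_const_mul]
  have huv := (integrable_sq_mul_sq hu hv hu4 hv4).const_mul (2 * c)
  simp only [← mul_assoc] at huv
  refine integral_mono (((hu4.const_mul a).add (hv4.const_mul b)).add huv)
    ((hu4.add hv4).const_mul (b + c)) fun x => ?_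
  have hu4x : 0 ≤ u x ^ 4 := by positivity
  have h_amgm : 2 * u x ^ 2 * v x ^ 2 ≤ u x ^ 4 + v x ^ 4 := by
    nlinarith [two_mul_le_add_sq (u x ^ 2) (v x ^ 2)]
  nlinarith [mul_le_mul_of_nonneg_right hab hu4x, mul_le_mul_of_nonneg_left h_amgm hc]

theorem integral_sq_pos_of_continuous [TopologicalSpace α] [OpensMeasurableSpace α]
    [μ.IsOpenPosMeasure] (hu : Continuous u) (hu0 : u ≠ 0)
    (hu2 : Integrable (fun x => u x ^ 2) μ) : 0 < ∫ x, u x ^ 2 ∂μ := by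
  rw [integral_pos_iff_support_of_nonneg (fun x => sq_nonneg (u x)) hu2]
  obtain ⟨x, hx⟩ := Function.ne_iff.1 hu0
  refine IsOpen.measure_pos μ ((hu.pow 2).isOpen_support) ⟨x, ?_⟩
  simpa using hx

end Measure

section Euclidean

variable {N : ℕ} {u v : EuclideanSpace ℝ (Fin N) → ℝ}

theorem H1sq_nonneg (u : EuclideanSpace ℝ (Fin N) → ℝ) : 0 ≤ H1sq u :=
  integral_nonneg fun x => by positivity

theorem integral_sq_le_H1sq (hu : MemLp u 2 volume)
    (hgu : MemLp (fun x => gradient u x) 2 volume) : ∫ x, u x ^ 2 ≤ H1sq u := by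
  rw [H1sq, integral_add hgu.norm.integrable_sq hu.integrable_sq]
  have : 0 ≤ ∫ x, ‖gradient u x‖ ^ 2 := integral_nonneg fun x => by positivity
  linarith

theorem one_add_mul_H1sq_add_le {κ : ℝ} (hκ : κ ≤ 0)
    (hu : MemLp u 2 volume) (hv : MemLp v 2 volume)
    (hgu : MemLp (fun x => gradient u x) 2 volume) (hgv : MemLp (fun x => gradient v x) 2 volume) :
    (1 + κ) * (H1sq u + H1sq v) ≤ H1sq u + H1sq v + 2 * κ * ∫ x, u x * v x := by
  have hL2 : (∫ x, u x ^ 2) + ∫ x, v x ^ 2 ≤ H1sq u + H1sq v :=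
    add_le_add (integral_sq_le_H1sq hu hgu) (integral_sq_le_H1sq hv hgv)
  nlinarith [two_mul_integral_mul_le_integral_sq_add hu hv]

theorem energy_eq_of_nehari {μ₁ μ₂ κ β : ℝ} (hu : AEStronglyMeasurable u volume)
    (hv : AEStronglyMeasurable v volume)
    (hu4 : Integrable (fun x => u x ^ 4) volume) (hv4 : Integrable (fun x => v x ^ 4) volume)
    (hNehari : H1sq u + H1sq v + 2 * κ * ∫ x, u x * v x =
      ∫ x, (μ₁ * u x ^ 4 + μ₂ * v x ^ 4 + 2 * β * u x ^ 2 * v x ^ 2)) :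
    energy μ₁ μ₂ κ β u v = (1 / 4) * (H1sq u + H1sq v + 2 * κ * ∫ x, u x * v x) := by
  have huv := (integrable_sq_mul_sq hu hv hu4 hv4).const_mul (2 * β)
  simp only [← mul_assoc] at huv
  rw [integral_add (f := fun x => μ₁ * u x ^ 4 + μ₂ * v x ^ 4)
    ((hu4.const_mul μ₁).add (hv4.const_mul μ₂)) huv] at hNehari
  simp only [mul_assoc (2 * β)] at hNehari
  rw [integral_const_mul] at hNehari
  rw [energy]
  linarith

end Euclidean

theorem stmt11_general (N : ℕ) (μ₁ μ₂ κ β C : ℝ)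
    (hκ₁ : -1 < κ) (hκ₂ : κ < 0) (hβ : 0 < β) (hμ₁ : 0 < μ₁) (hμ₁₂ : μ₁ ≤ μ₂) (hC : 0 < C)
    (hSob : ∀ w : EuclideanSpace ℝ (Fin N) → ℝ, ContDiff ℝ 1 w →
      MemLp w 2 (volume : Measure (EuclideanSpace ℝ (Fin N))) →
      MemLp (fun x => gradient w x) 2 (volume : Measure (EuclideanSpace ℝ (Fin N))) →
      Integrable (fun x => w x ^ 4) (volume : Measure (EuclideanSpace ℝ (Fin N))) →
      (∫ x, w x ^ 4) ≤ C * (H1sq w) ^ 2)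
    (u v : EuclideanSpace ℝ (Fin N) → ℝ)
    (hu : ContDiff ℝ 1 u) (hv : ContDiff ℝ 1 v)
    (huL2 : MemLp u 2 (volume : Measure (EuclideanSpace ℝ (Fin N))))
    (hvL2 : MemLp v 2 (volume : Measure (EuclideanSpace ℝ (Fin N))))
    (hugL2 : MemLp (fun x => gradient u x) 2 (volume : Measure (EuclideanSpace ℝ (Fin N))))
    (hvgL2 : MemLp (fun x => gradient v x) 2 (volume : Measure (EuclideanSpace ℝ (Fin N))))
    (hu4 : Integrable (fun x => u x ^ 4) (volume : Measure (EuclideanSpace ℝ (Fin N))))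
    (hv4 : Integrable (fun x => v x ^ 4) (volume : Measure (EuclideanSpace ℝ (Fin N))))
    (hune : u ≠ 0)
    (hNehari : H1sq u + H1sq v + 2 * κ * ∫ x, u x * v x =
      ∫ x, (μ₁ * u x ^ 4 + μ₂ * v x ^ 4 + 2 * β * u x ^ 2 * v x ^ 2)) :
    energy μ₁ μ₂ κ β u v = (1 / 4) * (H1sq u + H1sq v + 2 * κ * ∫ x, u x * v x) ∧
    energy μ₁ μ₂ κ β u v ≥ (1 + κ) ^ 2 / (16 * C * (μ₂ + β)) ∧
    (0 : ℝ) < (1 + κ) ^ 2 / (16 * C * (μ₂ + β)) := by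
  set S := H1sq u + H1sq v + 2 * κ * ∫ x, u x * v x
  have hμβ : 0 < μ₂ + β := by linarith
  have hκ : 0 < 1 + κ := by linarith
  have hA := H1sq_nonneg u
  have hB := H1sq_nonneg v
  have ht : 0 < H1sq u + H1sq v := by
    linarith [integral_sq_pos_of_continuous hu.continuous hune huL2.integrable_sq,
      integral_sq_le_H1sq huL2 hugL2]
  have hSobolev : (∫ x, u x ^ 4) + ∫ x, v x ^ 4 ≤ C * (H1sq u + H1sq v) ^ 2 := by
    nlinarith [hSob u hu huL2 hugL2 hu4, hSob v hv hvL2 hvgL2 hv4,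
      mul_nonneg hC.le (mul_nonneg hA hB)]
  have hup : S ≤ ((μ₂ + β) * C) * (H1sq u + H1sq v) ^ 2 := by
    calc S ≤ (μ₂ + β) * ((∫ x, u x ^ 4) + ∫ x, v x ^ 4) := hNehari ▸
          integral_quartic_le hμ₁₂ hβ.le huL2.1 hvL2.1 hu4 hv4
      _ ≤ ((μ₂ + β) * C) * (H1sq u + H1sq v) ^ 2 := by
          rw [mul_assoc]; exact mul_le_mul_of_nonneg_left hSobolev hμβ.le
  have hS : (1 + κ) ^ 2 / ((μ₂ + β) * C) ≤ S :=
    sq_div_le_of_mul_le_of_le_mul_sq hκ.le (by positivity) ht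
      (one_add_mul_H1sq_add_le hκ₂.le huL2 hvL2 hugL2 hvgL2) hup
  have hE := energy_eq_of_nehari huL2.1 hvL2.1 hu4 hv4 hNehari
  refine ⟨hE, ?_, by positivity⟩
  calc (1 + κ) ^ 2 / (16 * C * (μ₂ + β)) ≤ (1 + κ) ^ 2 / ((μ₂ + β) * C) / 4 := by
        rw [div_div]
        exact div_le_div_of_nonneg_left (sq_nonneg _) (by positivity) (by nlinarith)
    _ ≤ energy μ₁ μ₂ κ β u v := by rw [hE]; linarith

theorem stmt11 (N : ℕ) (hN : 1 ≤ N) (μ₁ μ₂ κ β C : ℝ)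
    (hκ₁ : -1 < κ) (hκ₂ : κ < 0) (hβ : 0 < β) (hμ₁ : 0 < μ₁) (hμ₁₂ : μ₁ ≤ μ₂) (hC : 0 < C)
    (hSob : ∀ w : EuclideanSpace ℝ (Fin N) → ℝ, ContDiff ℝ 1 w →
      MemLp w 2 (volume : Measure (EuclideanSpace ℝ (Fin N))) →
      MemLp (fun x => gradient w x) 2 (volume : Measure (EuclideanSpace ℝ (Fin N))) →
      Integrable (fun x => w x ^ 4) (volume : Measure (EuclideanSpace ℝ (Fin N))) →
      (∫ x, w x ^ 4) ≤ C * (H1sq w) ^ 2)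
    (u v : EuclideanSpace ℝ (Fin N) → ℝ)
    (hu : ContDiff ℝ 1 u) (hv : ContDiff ℝ 1 v)
    (huL2 : MemLp u 2 (volume : Measure (EuclideanSpace ℝ (Fin N))))
    (hvL2 : MemLp v 2 (volume : Measure (EuclideanSpace ℝ (Fin N))))
    (hugL2 : MemLp (fun x => gradient u x) 2 (volume : Measure (EuclideanSpace ℝ (Fin N))))
    (hvgL2 : MemLp (fun x => gradient v x) 2 (volume : Measure (EuclideanSpace ℝ (Fin N))))
    (hu4 : Integrable (fun x => u x ^ 4) (volume : Measure (EuclideanSpace ℝ (Fin N))))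
    (hv4 : Integrable (fun x => v x ^ 4) (volume : Measure (EuclideanSpace ℝ (Fin N))))
    (hune : u ≠ 0) (hvne : v ≠ 0)
    (hNehari : H1sq u + H1sq v + 2 * κ * ∫ x, u x * v x =
      ∫ x, (μ₁ * u x ^ 4 + μ₂ * v x ^ 4 + 2 * β * u x ^ 2 * v x ^ 2)) :
    energy μ₁ μ₂ κ β u v = (1 / 4) * (H1sq u + H1sq v + 2 * κ * ∫ x, u x * v x) ∧
    energy μ₁ μ₂ κ β u v ≥ (1 + κ) ^ 2 / (16 * C * (μ₂ + β)) ∧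
    (0 : ℝ) < (1 + κ) ^ 2 / (16 * C * (μ₂ + β)) :=
  stmt11_general N μ₁ μ₂ κ β C hκ₁ hκ₂ hβ hμ₁ hμ₁₂ hC hSob u v hu hv huL2 hvL2 hugL2 hvgL2 hu4 hv4
    hune hNehari
end

section
/- For all real numbers u ≥ 0, v ≥ 0, μ₂ ≥ μ₁ > 0 and β with −(μ₁²μ₂)^{1/3} ≤ β ≤ 0: μ₁u³ + μ₂v³ + βu²v + βuv² ≥ μ₁^{1/3}·(μ₁^{1/3}u − μ₂^{1/3}v)²·(u+v). -/
theorem stmt14 (u v β μ₁ μ₂ : ℝ) (hu : 0 ≤ u) (hv : 0 ≤ v)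
    (hμ₁ : 0 < μ₁) (hμ₁₂ : μ₁ ≤ μ₂)
    (hβl : -((μ₁ ^ 2 * μ₂) ^ ((1 : ℝ) / 3)) ≤ β) (hβu : β ≤ 0) :
    μ₁ * u ^ 3 + μ₂ * v ^ 3 + β * u ^ 2 * v + β * u * v ^ 2 ≥
      μ₁ ^ ((1 : ℝ) / 3) * (μ₁ ^ ((1 : ℝ) / 3) * u - μ₂ ^ ((1 : ℝ) / 3) * v) ^ 2 * (u + v) := by
  have hμ₂ : 0 < μ₂ := lt_of_lt_of_le hμ₁ hμ₁₂
  set a := μ₁ ^ ((1 : ℝ) / 3) with ha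
  set b := μ₂ ^ ((1 : ℝ) / 3) with hb
  have ha0 : 0 < a := Real.rpow_pos_of_pos hμ₁ _
  have hb0 : 0 < b := Real.rpow_pos_of_pos hμ₂ _
  have hab : a ≤ b := Real.rpow_le_rpow hμ₁.le hμ₁₂ (by norm_num)
  have ha3 : a ^ 3 = μ₁ := by
    rw [ha, ← Real.rpow_natCast (μ₁ ^ ((1:ℝ)/3)) 3, ← Real.rpow_mul hμ₁.le]
    norm_num
  have hb3 : b ^ 3 = μ₂ := by
    rw [hb, ← Real.rpow_natCast (μ₂ ^ ((1:ℝ)/3)) 3, ← Real.rpow_mul hμ₂.le]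
    norm_num
  have hcube : (μ₁ ^ 2 * μ₂) ^ ((1 : ℝ) / 3) = a ^ 2 * b := by
    rw [Real.mul_rpow (by positivity) hμ₂.le, hb]
    congr 1
    rw [ha, ← Real.rpow_natCast (μ₁ ^ ((1:ℝ)/3)) 2, ← Real.rpow_mul hμ₁.le,
      ← Real.rpow_natCast μ₁ 2, ← Real.rpow_mul hμ₁.le]
    norm_num [mul_comm]
  rw [hcube] at hβl
  rw [← ha3, ← hb3]
  nlinarith [mul_nonneg (mul_nonneg (sub_nonneg.2 hab) hv) (sq_nonneg (a*u - b*v)),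
    mul_nonneg (mul_nonneg (mul_nonneg (mul_nonneg (sub_nonneg.2 hab) hv) ha0.le) hb0.le) (mul_nonneg hu hv),
    mul_nonneg (mul_nonneg (by linarith : (0:ℝ) ≤ β + a^2*b) (mul_nonneg hu hv)) (add_nonneg hu hv),
    mul_pos ha0 hb0, mul_nonneg hu hv]
end

section
/- Let N ≥ 1, μ₂ ≥ μ₁ > 0, κ ≤ −1 and β > 0. If u, v : ℝ^N → ℝ are C² functions with u(x) > 0 and v(x) > 0 for all x, satisfying −Δu + u = μ₁u³ + βuv² − κv and −Δv + v = μ₂v³ + βu²v − κu pointwise, then U := u + v satisfies −ΔU(x) ≥ min{μ₁, β/3}·U(x)³ for all x ∈ ℝ^N. -/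
open MeasureTheory

/-!
Adding the two equations, the linear terms combine to `(-κ - 1) U ≥ 0` and
`-ΔU ≥ μ₁ (u³ + v³) + β u v (u + v)`. Since `U³ = u³ + v³ + 3 u v (u + v)`, the right-hand side is
at least `min μ₁ (β / 3) · U³`.
-/

theorem laplacian_add {N : ℕ} {u v : EuclideanSpace ℝ (Fin N) → ℝ} {x : EuclideanSpace ℝ (Fin N)}
    (hu : ContDiffAt ℝ 2 u x) (hv : ContDiffAt ℝ 2 v x) :
    laplacian (u + v) x = laplacian u x + laplacian v x := by
  simp only [laplacian, iteratedFDeriv_add_apply hu hv, add_apply,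
    Finset.sum_add_distrib]

theorem min_mul_add_pow_three_le {μ₁ μ₂ β a b : ℝ} (hμ : μ₁ ≤ μ₂) (ha : 0 ≤ a) (hb : 0 ≤ b) :
    min μ₁ (β / 3) * (a + b) ^ 3 ≤ μ₁ * a ^ 3 + μ₂ * b ^ 3 + β * a * b * (a + b) := by
  have hab : 0 ≤ a * b * (a + b) := by positivity
  calc min μ₁ (β / 3) * (a + b) ^ 3
      = min μ₁ (β / 3) * (a ^ 3 + b ^ 3) + 3 * min μ₁ (β / 3) * (a * b * (a + b)) := by ring
    _ ≤ μ₁ * (a ^ 3 + b ^ 3) + β * (a * b * (a + b)) := by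
      gcongr
      · exact min_le_left _ _
      · linarith [min_le_right μ₁ (β / 3)]
    _ ≤ μ₁ * a ^ 3 + μ₂ * b ^ 3 + β * a * b * (a + b) := by
      nlinarith [pow_nonneg hb 3]

theorem stmt15_general (N : ℕ) (μ₁ μ₂ κ β : ℝ)
    (hμ₁₂ : μ₁ ≤ μ₂) (hκ : κ ≤ -1)
    (u v : EuclideanSpace ℝ (Fin N) → ℝ) (hu : ContDiff ℝ 2 u) (hv : ContDiff ℝ 2 v)
    (hupos : ∀ x, 0 < u x) (hvpos : ∀ x, 0 < v x)
    (hequ : ∀ x, -laplacian u x + u x = μ₁ * u x ^ 3 + β * u x * v x ^ 2 - κ * v x)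
    (heqv : ∀ x, -laplacian v x + v x = μ₂ * v x ^ 3 + β * u x ^ 2 * v x - κ * u x) :
    ∀ x, -laplacian (fun y => u y + v y) x ≥ min μ₁ (β / 3) * (u x + v x) ^ 3 := by
  intro x
  have hsum : -laplacian (u + v) x = μ₁ * u x ^ 3 + μ₂ * v x ^ 3
      + β * u x * v x * (u x + v x) + (-κ - 1) * (u x + v x) := by
    rw [laplacian_add hu.contDiffAt hv.contDiffAt]
    linear_combination hequ x + heqv x
  have hlinear : 0 ≤ (-κ - 1) * (u x + v x) :=
    mul_nonneg (by linarith) (add_pos (hupos x) (hvpos x)).le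
  have hcubic := min_mul_add_pow_three_le (β := β) hμ₁₂ (hupos x).le (hvpos x).le
  change -laplacian (u + v) x ≥ _
  linarith

theorem stmt15 (N : ℕ) (hN : 1 ≤ N) (μ₁ μ₂ κ β : ℝ)
    (hμ₁ : 0 < μ₁) (hμ₁₂ : μ₁ ≤ μ₂) (hκ : κ ≤ -1) (hβ : 0 < β)
    (u v : EuclideanSpace ℝ (Fin N) → ℝ) (hu : ContDiff ℝ 2 u) (hv : ContDiff ℝ 2 v)
    (hupos : ∀ x, 0 < u x) (hvpos : ∀ x, 0 < v x)
    (hequ : ∀ x, -laplacian u x + u x = μ₁ * u x ^ 3 + β * u x * v x ^ 2 - κ * v x)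
    (heqv : ∀ x, -laplacian v x + v x = μ₂ * v x ^ 3 + β * u x ^ 2 * v x - κ * u x) :
    ∀ x, -laplacian (fun y => u y + v y) x ≥ min μ₁ (β / 3) * (u x + v x) ^ 3 :=
  stmt15_general N μ₁ μ₂ κ β hμ₁₂ hκ u v hu hv hupos hvpos hequ heqv
end

section
/- (Reduction of the linearized system.) Let N ≥ 1, κ > −1, β > −1, and let ω : ℝ^N → ℝ be a C² positive function satisfying −Δω + ω = ω³ pointwise; set ω_κ(x) := ω(√(1+κ)·x). Assume ω_κ is non-degenerate in the radial class: every radially symmetric C² function h : ℝ^N → ℝ with h, ∇h ∈ L²(ℝ^N) satisfying −Δh + (1+κ)h = 3(1+κ)ω_κ²h pointwise is identically zero. If (φ,ψ) is a pair of radially symmetric C² functions with φ, ψ, ∇φ, ∇ψ ∈ L²(ℝ^N) satisfying the linearized system pointwise: −Δφ + φ + κψ = ((1+κ)ω_κ²/(1+β))·((3+β)φ + 2βψ) and −Δψ + ψ + κφ = ((1+κ)ω_κ²/(1+β))·(2βφ + (3+β)ψ), then ψ = −φ and φ satisfies −Δφ + (1−κ)φ = ((1+κ)(3−β)/(1+β))·ω_κ²·φ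 pointwise. -/
open MeasureTheory

/-!
Adding the two equations of the linearized system, the coupling coefficients combine into
`((1 + κ) ω_κ² / (1 + β)) · (3 + 3β) = 3 (1 + κ) ω_κ²`, so `φ + ψ` solves the scalar linearized
equation. It is radial, `C²` and in `H¹`, hence vanishes by non-degeneracy; substituting
`ψ = -φ` into the first equation gives the reduced equation.
-/

section Gradient

variable {F : Type*} [NormedAddCommGroup F] [InnerProductSpace ℝ F] [CompleteSpace F]
  {f g : F → ℝ}

theorem gradient_add {x : F} (hf : DifferentiableAt ℝ f x) (hg : DifferentiableAt ℝ g x) :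
    gradient (f + g) x = gradient f x + gradient g x := by
  simp only [gradient, fderiv_add hf hg, map_add]

theorem MemLp.gradient_add [MeasurableSpace F] {μ : Measure F} {p : ENNReal}
    (hf : Differentiable ℝ f) (hg : Differentiable ℝ g)
    (hf' : MemLp (gradient f) p μ) (hg' : MemLp (gradient g) p μ) :
    MemLp (gradient (f + g)) p μ := by
  rw [show gradient (f + g) = gradient f + gradient g from
    funext fun x => _root_.gradient_add (hf x) (hg x)]
  exact hf'.add hg'

end Gradient

theorem linearizedSystem_rhs_add {κ β a p q : ℝ} (hβ : 1 + β ≠ 0) :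
    (1 + κ) * a / (1 + β) * ((3 + β) * p + 2 * β * q)
      + (1 + κ) * a / (1 + β) * (2 * β * p + (3 + β) * q) = 3 * (1 + κ) * a * (p + q) := by
  field_simp
  ring

theorem linearizedSystem_rhs_neg {κ β a p : ℝ} (hβ : 1 + β ≠ 0) :
    (1 + κ) * a / (1 + β) * ((3 + β) * p + 2 * β * -p) = (1 + κ) * (3 - β) / (1 + β) * a * p := by
  field_simp
  ring

theorem stmt18_general (N : ℕ) (κ β : ℝ) (hβ : -1 < β)
    (ωκ : EuclideanSpace ℝ (Fin N) → ℝ)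
    (hnondeg : ∀ h : EuclideanSpace ℝ (Fin N) → ℝ, ContDiff ℝ 2 h →
      (∀ x y, ‖x‖ = ‖y‖ → h x = h y) →
      MemLp h 2 (volume : Measure (EuclideanSpace ℝ (Fin N))) →
      MemLp (fun x => gradient h x) 2 (volume : Measure (EuclideanSpace ℝ (Fin N))) →
      (∀ x, -laplacian h x + (1 + κ) * h x = 3 * (1 + κ) * ωκ x ^ 2 * h x) →
      ∀ x, h x = 0)
    (φ ψ : EuclideanSpace ℝ (Fin N) → ℝ)
    (hφ : ContDiff ℝ 2 φ) (hψ : ContDiff ℝ 2 ψ)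
    (hφrad : ∀ x y, ‖x‖ = ‖y‖ → φ x = φ y) (hψrad : ∀ x y, ‖x‖ = ‖y‖ → ψ x = ψ y)
    (hφL2 : MemLp φ 2 (volume : Measure (EuclideanSpace ℝ (Fin N))))
    (hψL2 : MemLp ψ 2 (volume : Measure (EuclideanSpace ℝ (Fin N))))
    (hφgL2 : MemLp (fun x => gradient φ x) 2 (volume : Measure (EuclideanSpace ℝ (Fin N))))
    (hψgL2 : MemLp (fun x => gradient ψ x) 2 (volume : Measure (EuclideanSpace ℝ (Fin N))))
    (heq1 : ∀ x, -laplacian φ x + φ x + κ * ψ x =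
      ((1 + κ) * ωκ x ^ 2 / (1 + β)) * ((3 + β) * φ x + 2 * β * ψ x))
    (heq2 : ∀ x, -laplacian ψ x + ψ x + κ * φ x =
      ((1 + κ) * ωκ x ^ 2 / (1 + β)) * (2 * β * φ x + (3 + β) * ψ x)) :
    (∀ x, ψ x = -φ x) ∧
    (∀ x, -laplacian φ x + (1 - κ) * φ x =
      ((1 + κ) * (3 - β) / (1 + β)) * ωκ x ^ 2 * φ x) := by
  have hβ' : 1 + β ≠ 0 := by linarith
  have hsum : ∀ x, (φ + ψ) x = 0 := by
    refine hnondeg (φ + ψ) (hφ.add hψ) (fun x y hxy => ?_) (hφL2.add hψL2)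
      (MemLp.gradient_add (hφ.differentiable two_ne_zero) (hψ.differentiable two_ne_zero)
        hφgL2 hψgL2) (fun x => ?_)
    · simp only [Pi.add_apply, hφrad x y hxy, hψrad x y hxy]
    · have := linearizedSystem_rhs_add (κ := κ) (a := ωκ x ^ 2) (p := φ x) (q := ψ x) hβ'
      rw [laplacian_add hφ.contDiffAt hψ.contDiffAt, Pi.add_apply]
      linarith [heq1 x, heq2 x]
  have hψφ : ∀ x, ψ x = -φ x := fun x => by linarith [hsum x, Pi.add_apply φ ψ x]
  refine ⟨hψφ, fun x => ?_⟩
  have h1 := heq1 x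
  rw [hψφ x, linearizedSystem_rhs_neg hβ'] at h1
  linarith

theorem stmt18 (N : ℕ) (hN : 1 ≤ N) (κ β : ℝ) (hκ : -1 < κ) (hβ : -1 < β)
    (ω : EuclideanSpace ℝ (Fin N) → ℝ) (hω : ContDiff ℝ 2 ω) (hωpos : ∀ x, 0 < ω x)
    (hωeq : ∀ x, -laplacian ω x + ω x = ω x ^ 3)
    (ωκ : EuclideanSpace ℝ (Fin N) → ℝ)
    (hωκ : ∀ x, ωκ x = ω (Real.sqrt (1 + κ) • x))
    (hnondeg : ∀ h : EuclideanSpace ℝ (Fin N) → ℝ, ContDiff ℝ 2 h →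
      (∀ x y, ‖x‖ = ‖y‖ → h x = h y) →
      MemLp h 2 (volume : Measure (EuclideanSpace ℝ (Fin N))) →
      MemLp (fun x => gradient h x) 2 (volume : Measure (EuclideanSpace ℝ (Fin N))) →
      (∀ x, -laplacian h x + (1 + κ) * h x = 3 * (1 + κ) * ωκ x ^ 2 * h x) →
      ∀ x, h x = 0)
    (φ ψ : EuclideanSpace ℝ (Fin N) → ℝ)
    (hφ : ContDiff ℝ 2 φ) (hψ : ContDiff ℝ 2 ψ)
    (hφrad : ∀ x y, ‖x‖ = ‖y‖ → φ x = φ y) (hψrad : ∀ x y, ‖x‖ = ‖y‖ → ψ x = ψ y)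
    (hφL2 : MemLp φ 2 (volume : Measure (EuclideanSpace ℝ (Fin N))))
    (hψL2 : MemLp ψ 2 (volume : Measure (EuclideanSpace ℝ (Fin N))))
    (hφgL2 : MemLp (fun x => gradient φ x) 2 (volume : Measure (EuclideanSpace ℝ (Fin N))))
    (hψgL2 : MemLp (fun x => gradient ψ x) 2 (volume : Measure (EuclideanSpace ℝ (Fin N))))
    (heq1 : ∀ x, -laplacian φ x + φ x + κ * ψ x =
      ((1 + κ) * ωκ x ^ 2 / (1 + β)) * ((3 + β) * φ x + 2 * β * ψ x))
    (heq2 : ∀ x, -laplacian ψ x + ψ x + κ * φ x =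
      ((1 + κ) * ωκ x ^ 2 / (1 + β)) * (2 * β * φ x + (3 + β) * ψ x)) :
    (∀ x, ψ x = -φ x) ∧
    (∀ x, -laplacian φ x + (1 - κ) * φ x =
      ((1 + κ) * (3 - β) / (1 + β)) * ωκ x ^ 2 * φ x) :=
  stmt18_general N κ β hβ ωκ hnondeg φ ψ hφ hψ hφrad hψrad hφL2 hψL2 hφgL2 hψgL2 heq1 heq2
end
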